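/- Let H be a complex Hadamard matrix of order n, let 1 ≤ d ≤ n−1, and let S and T be d-element subsets of the row indices and column indices of H respectively. Then |det H[Sᶜ, Tᶜ]| = n^((n−2d)/2) · |det H[S, T]|, where H[S,T] denotes the d×d submatrix of H with rows S and columns T, and Sᶜ, Tᶜ denote the complementary index sets. Consequently the multiset of absolute values of (n−d)×(n−d) minors of H is obtained from the multiset of absolute values of its d×d minors by multiplying every value by n^(n/2−d), with multiplicities preserved. -/

import Mathlib

/-!
Order rows and columns so that `H = [[A, B], [C, D]]` with `A = H[S, T]` and `D = H[Sᶜ, Tᶜ]`.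
From `H Hᴴ = n • 1` one gets `H * [[Aᴴ, 0], [Bᴴ, 1]] = [[n • 1, B], [0, D]]`, so
`det H * conj (det A) = n ^ d * det D`; together with `|det H| = n ^ (n / 2)` this is the
identity between complementary minors. Complementation `(S, T) ↦ (Sᶜ, Tᶜ)` then matches the
`(n - d)`-minors with the `d`-minors, which gives the equality of counts.
-/

open Matrix

/-- `H` is a complex Hadamard matrix: unimodular entries and `H Hᴴ = n • I`. -/
def IsCHadamard {n : Type*} [Fintype n] [DecidableEq n] (H : Matrix n n ℂ) : Prop :=
  (∀ i j, Norm.norm (H i j) = 1) ∧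
    H * H.conjTranspose = (Fintype.card n : ℂ) • 1

/-- The number of pairs `(S, T)` of `d`-element sets of row- and column indices such
that the corresponding `d × d` minor of `H` has absolute value `t`. -/
noncomputable def minorCount {n : ℕ} (H : Matrix (Fin n) (Fin n) ℂ) (d : ℕ) (t : ℝ) : ℕ :=
  Nat.card {p : Finset (Fin n) × Finset (Fin n) //
    ∃ (h₁ : p.1.card = d) (h₂ : p.2.card = d),
      Norm.norm (Matrix.det (H.submatrix
        (fun a => (p.1.orderIsoOfFin h₁ a : Fin n))
        (fun b => (p.2.orderIsoOfFin h₂ b : Fin n)))) = t}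

variable {ι κ ν R : Type*}

theorem Matrix.det_fromBlocks_mul_star_det_eq_pow_mul_det
    [Fintype κ] [Fintype ν] [DecidableEq κ] [DecidableEq ν] [CommRing R] [StarRing R]
    {A : Matrix κ κ R} {B : Matrix κ ν R} {C : Matrix ν κ R} {D : Matrix ν ν R} {c : R}
    (h : fromBlocks A B C D * (fromBlocks A B C D)ᴴ = c • 1) :
    (fromBlocks A B C D).det * star A.det = c ^ Fintype.card κ * D.det := by
  rw [fromBlocks_conjTranspose, fromBlocks_multiply, ← fromBlocks_one, fromBlocks_smul] at h
  have h₁₁ : A * Aᴴ + B * Bᴴ = c • 1 := by simpa using congrArg toBlocks₁₁ h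
  have h₂₁ : C * Aᴴ + D * Bᴴ = 0 := by simpa using congrArg toBlocks₂₁ h
  have hprod : fromBlocks A B C D * fromBlocks Aᴴ 0 Bᴴ 1 = fromBlocks (c • 1) B 0 D := by
    simp [fromBlocks_multiply, h₁₁, h₂₁]
  simpa [det_fromBlocks_zero₁₂, det_fromBlocks_zero₂₁, det_conjTranspose] using
    congrArg det hprod

theorem IsCHadamard.submatrix_equiv [Fintype ι] [DecidableEq ι] [Fintype κ] [DecidableEq κ]
    {H : Matrix ι ι ℂ} (hH : IsCHadamard H) (e₁ e₂ : κ ≃ ι) :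
    IsCHadamard (H.submatrix e₁ e₂) := by
  refine ⟨fun i j => hH.1 _ _, ?_⟩
  rw [conjTranspose_submatrix, submatrix_mul_equiv, hH.2, Fintype.card_congr e₁]
  simp [submatrix_smul, submatrix_one_equiv]

theorem IsCHadamard.norm_det [Fintype ι] [DecidableEq ι] {H : Matrix ι ι ℂ}
    (hH : IsCHadamard H) :
    ‖H.det‖ = (Fintype.card ι : ℝ) ^ ((Fintype.card ι : ℝ) / 2) := by
  have hsq : ‖H.det‖ ^ 2 = (Fintype.card ι : ℝ) ^ Fintype.card ι := by
    simpa [det_conjTranspose, sq] using congrArg (‖det ·‖) hH.2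
  rw [← Real.sqrt_sq (norm_nonneg _), hsq, Real.sqrt_eq_rpow, ← Real.rpow_natCast,
    ← Real.rpow_mul (Nat.cast_nonneg _)]
  ring_nf

section Minors

variable [Fintype ι] [LinearOrder ι] [DecidableEq ι]

noncomputable def Matrix.submatrixOfFinsets {k l : ℕ} (H : Matrix ι ι R) (S T : Finset ι)
    (hS : S.card = k) (hT : T.card = l) : Matrix (Fin k) (Fin l) R :=
  H.submatrix (fun a => (S.orderIsoOfFin hS a : ι)) (fun b => (T.orderIsoOfFin hT b : ι))

noncomputable def Finset.finSumFinEquivOfCompl {k m : ℕ} (S S' : Finset ι) (hS' : S' = Sᶜ)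
    (hS : S.card = k) (hS'c : S'.card = m) : Fin k ⊕ Fin m ≃ ι :=
  (Equiv.sumCongr (S.orderIsoOfFin hS).toEquiv
    ((S'.orderIsoOfFin hS'c).toEquiv.trans
      (Equiv.subtypeEquivRight fun _ => by rw [hS', Finset.mem_compl]))).trans
    (Equiv.sumCompl (· ∈ S))

theorem Matrix.submatrix_finSumFinEquivOfCompl {k l m p : ℕ} (H : Matrix ι ι R)
    {S S' T T' : Finset ι} (hS' : S' = Sᶜ) (hT' : T' = Tᶜ) (hS : S.card = k)
    (hT : T.card = l) (hS'c : S'.card = m) (hT'c : T'.card = p) :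
    H.submatrix (S.finSumFinEquivOfCompl S' hS' hS hS'c)
        (T.finSumFinEquivOfCompl T' hT' hT hT'c) =
      fromBlocks (H.submatrixOfFinsets S T hS hT) (H.submatrixOfFinsets S T' hS hT'c)
        (H.submatrixOfFinsets S' T hS'c hT) (H.submatrixOfFinsets S' T' hS'c hT'c) := by
  ext (i | i) (j | j) <;> rfl

theorem IsCHadamard.norm_det_submatrixOfFinsets_compl [Nonempty ι] {d m : ℕ}
    {H : Matrix ι ι ℂ} (hH : IsCHadamard H) {S S' T T' : Finset ι} (hS' : S' = Sᶜ)
    (hT' : T' = Tᶜ) (hS : S.card = d) (hT : T.card = d) (hS'c : S'.card = m)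
    (hT'c : T'.card = m) :
    ‖(H.submatrixOfFinsets S' T' hS'c hT'c).det‖ =
      (Fintype.card ι : ℝ) ^ (((Fintype.card ι : ℝ) - 2 * d) / 2) *
        ‖(H.submatrixOfFinsets S T hS hT).det‖ := by
  set N : ℝ := (Fintype.card ι : ℝ)
  have hN : 0 < N := by simp [N, Fintype.card_pos]
  have hM := hH.submatrix_equiv (S.finSumFinEquivOfCompl S' hS' hS hS'c)
    (T.finSumFinEquivOfCompl T' hT' hT hT'c)
  have hcard : Fintype.card (Fin d ⊕ Fin m) = Fintype.card ι :=
    Fintype.card_congr (S.finSumFinEquivOfCompl S' hS' hS hS'c)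
  rw [submatrix_finSumFinEquivOfCompl] at hM
  have hdet := congrArg (‖·‖) (det_fromBlocks_mul_star_det_eq_pow_mul_det hM.2)
  simp only [norm_mul, norm_star, norm_pow, hM.norm_det, hcard, Complex.norm_natCast,
    Fintype.card_fin] at hdet
  have hexp : N ^ ((N - 2 * d) / 2) * N ^ d = N ^ (N / 2) := by
    rw [← Real.rpow_natCast, ← Real.rpow_add hN]
    ring_nf
  refine mul_left_cancel₀ (pow_ne_zero d hN.ne') ?_
  rw [← hdet, ← hexp]
  ring

end Minors

theorem IsCHadamard.minorCount_sub_eq {n d : ℕ} {H : Matrix (Fin n) (Fin n) ℂ}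
    (hH : IsCHadamard H) (hn : 0 < n) (hdn : d ≤ n) (t : ℝ) :
    minorCount H (n - d) ((n : ℝ) ^ ((((n : ℝ) - 2 * d) / 2) : ℝ) * t) = minorCount H d t := by
  have : Nonempty (Fin n) := ⟨⟨0, hn⟩⟩
  have hc : (n : ℝ) ^ ((((n : ℝ) - 2 * d) / 2) : ℝ) ≠ 0 :=
    (Real.rpow_pos_of_pos (by exact_mod_cast hn) _).ne'
  have hcard (S : Finset (Fin n)) : S.card = n - d ↔ Sᶜ.card = d := by
    have := S.card_le_univ
    rw [Finset.card_compl, Fintype.card_fin] at *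
    omega
  refine Nat.card_congr (Equiv.subtypeEquiv (compl_involutive.toPerm.prodCongr
    compl_involutive.toPerm) fun ⟨S, T⟩ => ?_)
  simp only [Function.Involutive.coe_toPerm, Equiv.prodCongr_apply, Prod.map]
  have key (hS : Sᶜ.card = d) (hT : Tᶜ.card = d) (hS' : S.card = n - d)
      (hT' : T.card = n - d) :
      ‖(H.submatrixOfFinsets S T hS' hT').det‖ =
        (n : ℝ) ^ ((((n : ℝ) - 2 * d) / 2) : ℝ) * ‖(H.submatrixOfFinsets Sᶜ Tᶜ hS hT).det‖ := by
    simpa only [Fintype.card_fin] using hH.norm_det_submatrixOfFinsets_compl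
      (compl_compl S).symm (compl_compl T).symm hS hT hS' hT'
  refine ⟨fun ⟨hS', hT', h⟩ => ⟨(hcard S).1 hS', (hcard T).1 hT', ?_⟩,
    fun ⟨hS, hT, h⟩ => ⟨(hcard S).2 hS, (hcard T).2 hT, ?_⟩⟩
  · exact mul_left_cancel₀ hc ((key _ _ hS' hT').symm.trans h)
  · exact (key hS hT _ _).trans (congrArg _ h)

theorem stmt14 (n : ℕ) (H : Matrix (Fin n) (Fin n) ℂ) (hH : IsCHadamard H)
    (d : ℕ) (hd1 : 1 ≤ d) (hdn : d ≤ n - 1) :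
    (∀ (S T : Finset (Fin n)) (hS : S.card = d) (hT : T.card = d)
        (hSc : Sᶜ.card = n - d) (hTc : Tᶜ.card = n - d),
      Norm.norm (Matrix.det (H.submatrix
          (fun a => (Sᶜ.orderIsoOfFin hSc a : Fin n))
          (fun b => (Tᶜ.orderIsoOfFin hTc b : Fin n)))) =
        (n : ℝ) ^ ((((n : ℝ) - 2 * d) / 2) : ℝ) *
          Norm.norm (Matrix.det (H.submatrix
            (fun a => (S.orderIsoOfFin hS a : Fin n))
            (fun b => (T.orderIsoOfFin hT b : Fin n))))) ∧
    (∀ t : ℝ, 0 ≤ t →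
      minorCount H (n - d) ((n : ℝ) ^ ((((n : ℝ) - 2 * d) / 2) : ℝ) * t) =
        minorCount H d t) := by
  have hn : 0 < n := by omega
  have : Nonempty (Fin n) := ⟨⟨0, hn⟩⟩
  refine ⟨fun S T hS hT hSc hTc => ?_, fun t _ => hH.minorCount_sub_eq hn (by omega) t⟩
  have h := hH.norm_det_submatrixOfFinsets_compl rfl rfl hS hT hSc hTc
  rw [Fintype.card_fin] at h
  exact h
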